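/- arXiv:2205.12656 — 2 statements merged into one kernel-verified Lean document; each statement's English description precedes it below -/
import Mathlib

section
/- Under the HoRR schedule with N locations, flight time f, displacement time g (2g < f), recharge time c ≥ 0, and cycle x = (f − 2g)/N, the UAV covering location i is instructed to recharge for the k-th time at time t_i^k = (i + (k−1)N + (k−1)⌈(2g + c)/x⌉) · x. -/
/-- HoRR recharge times: the UAV covering location `i` (1 ≤ i ≤ N) is first called back
at time `i * x`; after a call-back at time `t`, it is reused at the first multiple of `x`
that is at least `t + 2g + c`, and it is called back again `N * x` time units later. -/
theorem horr_recharge_times (f g c : ℝ) (N : ℕ) (hN : 1 ≤ N)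
    (hg : 0 ≤ g) (hf : 2 * g < f) (hc : 0 ≤ c)
    (x : ℝ) (hx : x = (f - 2 * g) / N)
    (i : ℕ) (hi1 : 1 ≤ i) (hiN : i ≤ N)
    (t : ℕ → ℝ)
    (ht1 : t 1 = (i : ℝ) * x)
    (htrec : ∀ k, 1 ≤ k → t (k + 1) = (⌈(t k + 2 * g + c) / x⌉ : ℝ) * x + (N : ℝ) * x) :
    ∀ k, 1 ≤ k →
      t k = ((i : ℝ) + (k - 1 : ℕ) * N + (k - 1 : ℕ) * (⌈(2 * g + c) / x⌉ : ℝ)) * x := by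
  have hNpos : (0:ℝ) < N := by exact_mod_cast Nat.lt_of_lt_of_le Nat.zero_lt_one hN
  have hxpos : 0 < x := by rw [hx]; apply div_pos <;> linarith
  intro k hk
  induction k with
  | zero => omega
  | succ n ih =>
    rcases Nat.eq_zero_or_pos n with rfl | hn
    · simpa using ht1
    · obtain ⟨m, rfl⟩ : ∃ m, n = m + 1 := ⟨n - 1, by omega⟩
      have ihn := ih (by omega)
      set M : ℤ := ⌈(2 * g + c) / x⌉ with hM
      have hz : t (m + 1) = (((i : ℤ) + m * N + m * M : ℤ) : ℝ) * x := by
        rw [ihn]; push_cast; ring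
      have hdiv : (t (m + 1) + 2 * g + c) / x
          = (((i : ℤ) + m * N + m * M : ℤ) : ℝ) + (2 * g + c) / x := by
        rw [hz]; field_simp; ring
      have hceil : ⌈(t (m + 1) + 2 * g + c) / x⌉ = ((i : ℤ) + m * N + m * M) + M := by
        rw [hdiv, add_comm, Int.ceil_add_intCast]; rw [hM]; ring
      rw [htrec (m + 1) (by omega), hceil]
      push_cast
      ring
end

section
/- In the setting of the kPP-to-BMIDP reduction, suppose max_{j ∈ S_k} w_j + ∑_{j ∈ S_k} w_j ≤ 1 for every k (where w_j = (N/(I_sum + N·i^{(k)}))·i_j for j ∈ S_k). Then ∑_{j ∈ S_k} i_j ≤ I_sum/N for every k, and since ∑_k ∑_{j ∈ S_k} i_j = I_sum, equality ∑_{j ∈ S_k} i_j = I_sum/N holds for every k. -/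
theorem kpp_to_bmidp_sufficient (n N : ℕ) (hN : 1 ≤ N) (it : Fin n → ℝ)
    (hnn : ∀ j, 0 ≤ it j)
    (hpos : 0 < ∑ j, it j)
    (S : Fin N → Finset (Fin n))
    (hdisj : ∀ k l, k ≠ l → Disjoint (S k) (S l))
    (hcover : ∀ j, ∃ k, j ∈ S k)
    (hne : ∀ k, (S k).Nonempty)
    (hfit : ∀ k,
      (S k).sup' (hne k)
          (fun j => ((N : ℝ) / (∑ j, it j + N * (S k).sup' (hne k) it)) * it j) +
        ∑ j ∈ S k, ((N : ℝ) / (∑ j, it j + N * (S k).sup' (hne k) it)) * it j ≤ 1) :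
    (∀ k, ∑ j ∈ S k, it j ≤ (∑ j, it j) / N) ∧
    (∀ k, ∑ j ∈ S k, it j = (∑ j, it j) / N) := by
  have hNpos : (0:ℝ) < N := by exact_mod_cast Nat.lt_of_lt_of_le Nat.zero_lt_one hN
  set I : ℝ := ∑ j, it j with hI
  have hle : ∀ k, ∑ j ∈ S k, it j ≤ I / N := by
    intro k
    set M : ℝ := (S k).sup' (hne k) it with hM
    have hMnn : 0 ≤ M := by
      obtain ⟨j, hj⟩ := hne k
      exact le_trans (hnn j) (Finset.le_sup' it hj)
    have hD : (0:ℝ) < I + N * M := by positivity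
    set c : ℝ := (N:ℝ) / (I + N * M) with hc
    obtain ⟨j0, hj0, hj0eq⟩ := Finset.exists_mem_eq_sup' (hne k) it
    have hsup : c * M ≤ (S k).sup' (hne k) (fun j => c * it j) := by
      have hM0 : M = it j0 := by rw [hM, hj0eq]
      rw [hM0]
      exact Finset.le_sup' (fun j => c * it j) hj0
    have h1 : c * M + c * ∑ j ∈ S k, it j ≤ 1 := by
      have := hfit k
      rw [Finset.mul_sum]
      calc c * M + ∑ j ∈ S k, c * it j
          ≤ (S k).sup' (hne k) (fun j => c * it j) + ∑ j ∈ S k, c * it j := by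
            linarith [hsup]
        _ ≤ 1 := this
    have h2 : (N:ℝ) * (M + ∑ j ∈ S k, it j) ≤ I + N * M := by
      have : c * (M + ∑ j ∈ S k, it j) ≤ 1 := by linarith [h1]
      rw [hc, div_mul_eq_mul_div, div_le_one hD] at this
      linarith [this]
    rw [le_div_iff₀ hNpos]
    nlinarith [h2]
  refine ⟨hle, ?_⟩
  have hsum : ∑ k, ∑ j ∈ S k, it j = I := by
    have hbi : (Finset.univ : Finset (Fin N)).biUnion S = Finset.univ := by
      ext j
      simp only [Finset.mem_biUnion, Finset.mem_univ, true_and, iff_true]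
      exact hcover j
    rw [hI, ← hbi, Finset.sum_biUnion]
    intro k _ l _ hkl
    exact hdisj k l hkl
  intro k
  by_contra hne'
  have hlt : ∑ j ∈ S k, it j < I / N := lt_of_le_of_ne (hle k) hne'
  have hlt2 : ∑ k, ∑ j ∈ S k, it j < ∑ _k : Fin N, I / N :=
    Finset.sum_lt_sum (fun l _ => hle l) ⟨k, Finset.mem_univ k, hlt⟩
  rw [hsum, Finset.sum_const, Finset.card_univ, Fintype.card_fin, nsmul_eq_mul,
    mul_div_cancel₀ _ (ne_of_gt hNpos)] at hlt2
  exact lt_irrefl I hlt2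
end
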